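/- arXiv:1909.07974 — 3 statements merged into one kernel-verified Lean document; each statement's English description precedes it below -/
import Mathlib

section
/- Let P_0, P_1, ... be n-by-n matrices and A_ℓ the Laplacian pyramids operators (A_0 = P_0, A_ℓ = A_{ℓ-1} + P_ℓ(I - A_{ℓ-1})). If there exist 0 < ε < 1 and L ≥ 1 such that ‖I - P_ℓ‖ ≤ ε for all ℓ > L (in an induced matrix norm), then A_ℓ f → f as ℓ → ∞ for every f ∈ ℝ^n; moreover ‖A_{ℓ+1} f - f‖ ≤ ε ‖A_ℓ f - f‖ for all ℓ > L. -/
/-- The Laplacian pyramids operators. -/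
noncomputable def lpA {n : ℕ} (P : ℕ → Matrix (Fin n) (Fin n) ℝ) :
    ℕ → Matrix (Fin n) (Fin n) ℝ
  | 0 => P 0
  | (ℓ+1) => lpA P ℓ + P (ℓ+1) * (1 - lpA P ℓ)

lemma lpA_key {n : ℕ} (P : ℕ → Matrix (Fin n) (Fin n) ℝ) (f : Fin n → ℝ) (ℓ : ℕ) :
    (lpA P (ℓ + 1)).mulVec f - f
      = (1 - P (ℓ + 1)).mulVec ((lpA P ℓ).mulVec f - f) := by
  simp only [lpA, Matrix.add_mulVec, Matrix.sub_mulVec, Matrix.one_mulVec,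
    ← Matrix.mulVec_mulVec, Matrix.mul_sub, Matrix.mul_one, Matrix.mulVec_sub]
  abel

/-- Convergence of the Laplacian pyramids scheme on the sampled points: if
`‖I - P_ℓ‖ ≤ ε < 1` for all `ℓ > L` in a matrix norm `Nm` compatible with the
vector norm, then `A_ℓ f → f`, and `‖A_{ℓ+1} f - f‖ ≤ ε ‖A_ℓ f - f‖` for `ℓ > L`. -/
theorem stmt2 {n : ℕ} (P : ℕ → Matrix (Fin n) (Fin n) ℝ)
    (Nm : Matrix (Fin n) (Fin n) ℝ → ℝ)
    (hcompat : ∀ (M : Matrix (Fin n) (Fin n) ℝ) (v : Fin n → ℝ),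
      ‖M.mulVec v‖ ≤ Nm M * ‖v‖)
    (ε : ℝ) (hε0 : 0 < ε) (hε1 : ε < 1) (L : ℕ) (hL : 1 ≤ L)
    (hP : ∀ ℓ > L, Nm (1 - P ℓ) ≤ ε) (f : Fin n → ℝ) :
    Filter.Tendsto (fun ℓ => (lpA P ℓ).mulVec f) Filter.atTop (nhds f) ∧
    ∀ ℓ > L, ‖(lpA P (ℓ + 1)).mulVec f - f‖ ≤ ε * ‖(lpA P ℓ).mulVec f - f‖ := by
  set g : ℕ → ℝ := fun ℓ => ‖(lpA P ℓ).mulVec f - f‖ with hg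
  have step : ∀ ℓ, L ≤ ℓ → g (ℓ + 1) ≤ ε * g ℓ := by
    intro ℓ hℓ
    have := hcompat (1 - P (ℓ + 1)) ((lpA P ℓ).mulVec f - f)
    calc g (ℓ + 1) = ‖(1 - P (ℓ + 1)).mulVec ((lpA P ℓ).mulVec f - f)‖ := by
          simp only [hg]; rw [lpA_key]
      _ ≤ Nm (1 - P (ℓ + 1)) * g ℓ := this
      _ ≤ ε * g ℓ := by
          exact mul_le_mul_of_nonneg_right (hP (ℓ + 1) (by omega)) (norm_nonneg _)
  have geo : ∀ m, g (L + 1 + m) ≤ ε ^ m * g (L + 1) := by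
    intro m
    induction m with
    | zero => simp
    | succ k ih =>
        have h1 : g (L + 1 + (k + 1)) ≤ ε * g (L + 1 + k) := by
          have := step (L + 1 + k) (by omega)
          simpa [Nat.add_assoc] using this
        calc g (L + 1 + (k + 1)) ≤ ε * g (L + 1 + k) := h1
          _ ≤ ε * (ε ^ k * g (L + 1)) := by
              exact mul_le_mul_of_nonneg_left ih hε0.le
          _ = ε ^ (k + 1) * g (L + 1) := by ring
  constructor
  · rw [tendsto_iff_norm_sub_tendsto_zero]
    have hbound : Filter.Tendsto (fun ℓ : ℕ => ε ^ (ℓ - (L + 1)) * g (L + 1))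
        Filter.atTop (nhds 0) := by
      have h1 : Filter.Tendsto (fun ℓ : ℕ => ε ^ (ℓ - (L + 1))) Filter.atTop (nhds 0) :=
        (tendsto_pow_atTop_nhds_zero_of_lt_one hε0.le hε1).comp
          (Filter.tendsto_sub_atTop_nat (L + 1))
      simpa using h1.mul_const (g (L + 1))
    apply squeeze_zero' (Filter.Eventually.of_forall fun ℓ => norm_nonneg _) ?_ hbound
    filter_upwards [Filter.eventually_ge_atTop (L + 1)] with ℓ hℓ
    have : g ℓ ≤ ε ^ (ℓ - (L + 1)) * g (L + 1) := by
      have := geo (ℓ - (L + 1))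
      rwa [Nat.add_sub_cancel' hℓ] at this
    exact this
  · intro ℓ hℓ
    exact step ℓ (le_of_lt hℓ)
end

section
/- Let Φ : [0,∞) → [0,∞) be decreasing with Φ(r) ≤ C r^{-q} for all r > 0, where q > p and C > 0. Let x_1, ..., x_n ∈ ℝ^p be δ-separated (‖x_i - x_j‖ ≥ δ for i ≠ j). Then there is a constant C_p depending only on p, q, C such that for every i and every bandwidth σ > 0, Σ_{j ≠ i} Φ(‖x_i - x_j‖/σ) ≤ C_p (σ/δ)^q. -/
/-!
Bound each term by `C σ^q ‖x_i - x_j‖^(-q)` and split the points into dyadic shells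
`2^k δ ≤ ‖x_i - x_j‖ < 2^(k+1) δ`. A volume comparison of disjoint balls of radius `δ / 2` shows
that at most `8^p 2^(kp)` points lie in the `k`-th shell, each contributing at most
`(2^k δ)^(-q)`; since `q > p` the shell contributions form a convergent geometric series
with ratio `2^(p - q)`.
-/

open MeasureTheory Metric Module Finset

/-- Keeping every scale `k` with `a < 2^(k+1) δ`, not just the dyadic scale of `a`, turns the
bound into one whose sum over points is a sum of counts of points in balls. -/
theorem rpow_neg_le_sum_dyadic {q δ a : ℝ} (hq : 0 ≤ q) (hδ : 0 < δ) (ha : δ ≤ a) {M : ℕ}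
    (hM : a < 2 ^ M * δ) :
    a ^ (-q) ≤ ∑ k ∈ range M, if a < 2 ^ (k + 1) * δ then (2 ^ k * δ) ^ (-q) else 0 := by
  obtain ⟨k, hk_le, hk_lt⟩ :=
    exists_nat_pow_near ((one_le_div hδ).2 ha) (one_lt_two : (1 : ℝ) < 2)
  rw [le_div_iff₀ hδ] at hk_le
  rw [div_lt_iff₀ hδ] at hk_lt
  have hkM : k < M := by
    have : (2 : ℝ) ^ k < 2 ^ M := lt_of_mul_lt_mul_right (hk_le.trans_lt hM) hδ.le
    exact (pow_lt_pow_iff_right₀ one_lt_two).1 this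
  calc a ^ (-q) ≤ (2 ^ k * δ) ^ (-q) :=
        Real.rpow_le_rpow_of_nonpos (by positivity) hk_le (neg_nonpos.2 hq)
    _ = if a < 2 ^ (k + 1) * δ then (2 ^ k * δ) ^ (-q) else 0 := (if_pos hk_lt).symm
    _ ≤ _ := single_le_sum (f := fun k => if a < 2 ^ (k + 1) * δ then (2 ^ k * δ) ^ (-q) else 0)
        (fun k _ => by positivity) (mem_range.2 hkM)

section Separated

variable {ι E : Type*} [NormedAddCommGroup E] [NormedSpace ℝ E] [FiniteDimensional ℝ E]

theorem card_mul_pow_finrank_le_of_separated {δ r : ℝ} (hδ : 0 < δ) (hr : 0 ≤ r) (c : E)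
    (t : Finset ι) (x : ι → E) (hsep : (t : Set ι).Pairwise fun j k => δ ≤ dist (x j) (x k))
    (hmem : ∀ j ∈ t, dist c (x j) ≤ r) :
    (#t : ℝ) * δ ^ finrank ℝ E ≤ (2 * r + δ) ^ finrank ℝ E := by
  let _ : MeasurableSpace E := borel E
  have _ : BorelSpace E := ⟨rfl⟩
  set μ : Measure E := Measure.addHaar
  set d := finrank ℝ E
  have hdisj : (t : Set ι).PairwiseDisjoint fun j => ball (x j) (δ / 2) :=
    fun j hj k hk hjk => ball_disjoint_ball (by linarith [hsep hj hk hjk])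
  have hsub : (⋃ j ∈ t, ball (x j) (δ / 2)) ⊆ ball c (r + δ / 2) :=
    Set.iUnion₂_subset fun j hj => ball_subset_ball' (by
      rw [dist_comm]; linarith [hmem j hj])
  have hvol : (#t : ENNReal) * (ENNReal.ofReal ((δ / 2) ^ d) * μ (ball 0 1)) ≤
      ENNReal.ofReal ((r + δ / 2) ^ d) * μ (ball 0 1) := by
    calc (#t : ENNReal) * (ENNReal.ofReal ((δ / 2) ^ d) * μ (ball 0 1))
        = ∑ j ∈ t, μ (ball (x j) (δ / 2)) := by
          simp only [μ.addHaar_ball_of_pos _ (half_pos hδ), sum_const, nsmul_eq_mul]; rfl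
      _ = μ (⋃ j ∈ t, ball (x j) (δ / 2)) :=
          (measure_biUnion_finset hdisj fun j _ => measurableSet_ball).symm
      _ ≤ μ (ball c (r + δ / 2)) := measure_mono hsub
      _ = ENNReal.ofReal ((r + δ / 2) ^ d) * μ (ball 0 1) :=
          μ.addHaar_ball_of_pos _ (by positivity)
  have hunit : μ (ball 0 1) ≠ 0 := (isOpen_ball.measure_pos μ ⟨0, mem_ball_self one_pos⟩).ne'
  rw [← mul_assoc, ENNReal.mul_le_mul_iff_left hunit measure_ball_lt_top.ne,
    ← ENNReal.ofReal_natCast, ← ENNReal.ofReal_mul (by positivity),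
    ENNReal.ofReal_le_ofReal_iff (by positivity)] at hvol
  calc (#t : ℝ) * δ ^ d = 2 ^ d * (#t * (δ / 2) ^ d) := by
        rw [div_pow]; field_simp
    _ ≤ 2 ^ d * (r + δ / 2) ^ d := by gcongr
    _ = (2 * r + δ) ^ d := by rw [← mul_pow]; ring_nf

theorem card_mul_rpow_neg_le_of_separated {q δ : ℝ} (hδ : 0 < δ) (c : E) (t : Finset ι)
    (x : ι → E) (hsep : (t : Set ι).Pairwise fun j k => δ ≤ dist (x j) (x k)) (k : ℕ) :
    #{j ∈ t | dist c (x j) < 2 ^ (k + 1) * δ} * (2 ^ k * δ) ^ (-q) ≤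
      8 ^ finrank ℝ E * δ ^ (-q) * (2 ^ ((finrank ℝ E : ℝ) - q)) ^ k := by
  set d := finrank ℝ E
  have hcard : (#{j ∈ t | dist c (x j) < 2 ^ (k + 1) * δ} : ℝ) ≤ 8 ^ d * (2 ^ k) ^ d := by
    have hpack := card_mul_pow_finrank_le_of_separated hδ (r := 2 ^ (k + 1) * δ) (by positivity)
      c {j ∈ t | dist c (x j) < 2 ^ (k + 1) * δ} x (hsep.mono (coe_subset.2 (filter_subset _ _)))
      fun j hj => (mem_filter.1 hj).2.le
    have hradius : (2 * (2 ^ (k + 1) * δ) + δ) ^ d ≤ (8 * 2 ^ k * δ) ^ d := by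
      have : (1 : ℝ) ≤ 2 ^ k := one_le_pow₀ one_le_two
      gcongr
      rw [pow_succ]; nlinarith
    rw [mul_pow, mul_pow] at hradius
    exact le_of_mul_le_mul_right (hpack.trans hradius) (pow_pos hδ d)
  have hscale : ((2 : ℝ) ^ k) ^ d * ((2 : ℝ) ^ k) ^ (-q) = (2 ^ ((d : ℝ) - q)) ^ k := by
    rw [← Real.rpow_natCast, ← Real.rpow_add (by positivity), Real.rpow_pow_comm zero_le_two,
      sub_eq_add_neg]
  calc (#{j ∈ t | dist c (x j) < 2 ^ (k + 1) * δ} : ℝ) * (2 ^ k * δ) ^ (-q)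
      ≤ 8 ^ d * (2 ^ k) ^ d * ((2 ^ k) ^ (-q) * δ ^ (-q)) := by
        rw [Real.mul_rpow (by positivity) hδ.le]; gcongr
    _ = 8 ^ d * δ ^ (-q) * (2 ^ ((d : ℝ) - q)) ^ k := by rw [← hscale]; ring

theorem sum_rpow_neg_dist_le_of_separated {q δ : ℝ} (hq : (finrank ℝ E : ℝ) < q) (hδ : 0 < δ)
    (c : E) (t : Finset ι) (x : ι → E)
    (hsep : (t : Set ι).Pairwise fun j k => δ ≤ dist (x j) (x k))
    (hfar : ∀ j ∈ t, δ ≤ dist c (x j)) :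
    ∑ j ∈ t, dist c (x j) ^ (-q) ≤
      8 ^ finrank ℝ E / (1 - 2 ^ ((finrank ℝ E : ℝ) - q)) * δ ^ (-q) := by
  set d := finrank ℝ E
  set ρ : ℝ := 2 ^ ((d : ℝ) - q)
  have hρ_lt_one : ρ < 1 := Real.rpow_lt_one_of_one_lt_of_neg one_lt_two (by linarith)
  obtain ⟨M, hM⟩ : ∃ M : ℕ, ∀ j ∈ t, dist c (x j) < 2 ^ M * δ := by
    obtain ⟨M, hM⟩ := pow_unbounded_of_one_lt ((∑ j ∈ t, dist c (x j)) / δ) one_lt_two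
    refine ⟨M, fun j hj => (div_lt_iff₀ hδ).1 (lt_of_le_of_lt ?_ hM)⟩
    gcongr
    exact single_le_sum (fun _ _ => dist_nonneg) hj
  calc ∑ j ∈ t, dist c (x j) ^ (-q)
      ≤ ∑ j ∈ t, ∑ k ∈ range M,
          if dist c (x j) < 2 ^ (k + 1) * δ then (2 ^ k * δ) ^ (-q) else 0 :=
        sum_le_sum fun j hj =>
          rpow_neg_le_sum_dyadic (by linarith [d.cast_nonneg (α := ℝ)]) hδ (hfar j hj) (hM j hj)
    _ = ∑ k ∈ range M, #{j ∈ t | dist c (x j) < 2 ^ (k + 1) * δ} * (2 ^ k * δ) ^ (-q) := by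
        rw [sum_comm]
        simp only [← sum_filter, sum_const, nsmul_eq_mul]
    _ ≤ ∑ k ∈ range M, 8 ^ d * δ ^ (-q) * ρ ^ k :=
        sum_le_sum fun k _ => card_mul_rpow_neg_le_of_separated hδ c t x hsep k
    _ = 8 ^ d * δ ^ (-q) * ∑ k ∈ range M, ρ ^ k := (mul_sum _ _ _).symm
    _ ≤ 8 ^ d * δ ^ (-q) * (ρ ^ 0 / (1 - ρ)) := by
        gcongr
        rw [range_eq_Ico]
        exact geom_sum_Ico_le_of_lt_one (by positivity) hρ_lt_one
    _ = 8 ^ d / (1 - ρ) * δ ^ (-q) := by ring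

end Separated

/-- Off-diagonal kernel sum bound: there is a constant `Cp = Cp(p, q, C)` such that
for any decreasing radial profile `Φ : [0,∞) → [0,∞)` with `Φ(r) ≤ C r^{-q}` (`q > p`),
any `δ`-separated points `x_1, …, x_n ∈ ℝ^p`, any `i`, and any bandwidth `σ > 0`,
`Σ_{j ≠ i} Φ(‖x_i - x_j‖/σ) ≤ Cp (σ/δ)^q`. -/
theorem stmt5 (p : ℕ) (q C : ℝ) (hq : (p : ℝ) < q) (hC : 0 < C) :
    ∃ Cp > (0 : ℝ), ∀ (Φ : ℝ → ℝ), (∀ r, 0 ≤ Φ r) → AntitoneOn Φ (Set.Ici 0) →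
      (∀ r > (0 : ℝ), Φ r ≤ C * r ^ (-q)) →
      ∀ (n : ℕ) (x : Fin n → EuclideanSpace ℝ (Fin p)) (δ : ℝ), 0 < δ →
        (∀ i j, i ≠ j → δ ≤ dist (x i) (x j)) →
        ∀ (i : Fin n) (σ : ℝ), 0 < σ →
          ∑ j ∈ Finset.univ.erase i, Φ (dist (x i) (x j) / σ) ≤ Cp * (σ / δ) ^ q := by
  have hdim : (finrank ℝ (EuclideanSpace ℝ (Fin p)) : ℝ) < q := by simpa using hq
  have hρ_lt_one : (2 : ℝ) ^ ((p : ℝ) - q) < 1 :=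
    Real.rpow_lt_one_of_one_lt_of_neg one_lt_two (by linarith)
  refine ⟨C * (8 ^ p / (1 - 2 ^ ((p : ℝ) - q))), by have := sub_pos.2 hρ_lt_one; positivity, ?_⟩
  intro Φ _ _ hΦ n x δ hδ hsep i σ hσ
  have hfar : ∀ j ∈ univ.erase i, δ ≤ dist (x i) (x j) := fun j hj =>
    hsep i j (ne_of_mem_erase hj).symm
  calc ∑ j ∈ univ.erase i, Φ (dist (x i) (x j) / σ)
      ≤ ∑ j ∈ univ.erase i, C * σ ^ q * dist (x i) (x j) ^ (-q) := by
        refine sum_le_sum fun j hj => ?_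
        have hdist : 0 < dist (x i) (x j) := hδ.trans_le (hfar j hj)
        calc Φ (dist (x i) (x j) / σ) ≤ C * (dist (x i) (x j) / σ) ^ (-q) := hΦ _ (by positivity)
          _ = C * σ ^ q * dist (x i) (x j) ^ (-q) := by
            rw [Real.div_rpow hdist.le hσ.le, Real.rpow_neg hσ.le, div_inv_eq_mul]; ring
    _ = C * σ ^ q * ∑ j ∈ univ.erase i, dist (x i) (x j) ^ (-q) := (mul_sum _ _ _).symm
    _ ≤ C * σ ^ q * (8 ^ p / (1 - 2 ^ ((p : ℝ) - q)) * δ ^ (-q)) := by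
        gcongr
        simpa using sum_rpow_neg_dist_le_of_separated hdim hδ (x i) (univ.erase i) x
          (fun j _ k _ hjk => hsep j k hjk) hfar
    _ = C * (8 ^ p / (1 - 2 ^ ((p : ℝ) - q))) * (σ / δ) ^ q := by
        rw [Real.div_rpow hσ.le hδ.le, Real.rpow_neg hδ.le]; ring
end

section
/- Let Φ : [0,∞) → [0,∞) be decreasing with Φ(0) = 1 and Φ(r) ≤ C r^{-q} for r > 0 with q > p. Let x_1, ..., x_n ∈ ℝ^p be δ-separated, and for bandwidth σ > 0 define the row-stochastic matrix P_σ(i,j) = Φ(‖x_i - x_j‖/σ) / Σ_{j'} Φ(‖x_i - x_{j'}‖/σ). Then for every 0 < ε < 1 there exists c = c(p, q, C, ε) > 0 such that σ < cδ implies ‖I - P_σ‖_∞ < ε. -/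
/-- The ℓ∞ operator norm (maximum absolute row sum) of an `n × n` real matrix. -/
noncomputable def inftyNorm {n : ℕ} (hn : 0 < n) (M : Matrix (Fin n) (Fin n) ℝ) : ℝ :=
  Finset.univ.sup' (Finset.univ_nonempty_iff.mpr ⟨⟨0, hn⟩⟩) fun i => ∑ j, |M i j|

open Finset MeasureTheory Metric
open scoped ENNReal NNReal

/-- Packing lemma: δ-separated points in ℝ^p within a ball of radius R. -/
lemma pack_card {p n : ℕ} (x : Fin n → EuclideanSpace ℝ (Fin p)) {δ : ℝ} (hδ : 0 < δ)
    (hsep : ∀ i j, i ≠ j → δ ≤ dist (x i) (x j)) (i : Fin n) {R : ℝ} (hR : 0 ≤ R) :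
    ((Finset.univ.filter fun j => dist (x i) (x j) ≤ R).card : ℝ) ≤ (2 * R / δ + 1) ^ p := by
  rcases Nat.eq_zero_or_pos p with hp | hp
  · subst hp
    simp only [pow_zero]
    have hcard : (Finset.univ.filter fun j => dist (x i) (x j) ≤ R).card ≤ 1 := by
      refine Finset.card_le_one.mpr fun a ha b hb => ?_
      by_contra hab
      have := hsep a b hab
      have : dist (x a) (x b) = 0 := by
        have : Subsingleton (EuclideanSpace ℝ (Fin 0)) := by
          refine ⟨fun u v => ?_⟩
          ext k
          exact absurd k.2 (Nat.not_lt_zero _)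
        simp [Subsingleton.elim (x a) (x b)]
      linarith [hsep a b hab]
    exact_mod_cast hcard
  · haveI : Nontrivial (EuclideanSpace ℝ (Fin p)) := by
      have : 0 < Module.finrank ℝ (EuclideanSpace ℝ (Fin p)) := by
        rw [finrank_euclideanSpace_fin]; exact hp
      exact Module.nontrivial_of_finrank_pos this
    set s := Finset.univ.filter fun j => dist (x i) (x j) ≤ R with hs
    have hdisj : (s : Set (Fin n)).PairwiseDisjoint fun j => ball (x j) (δ / 2) := by
      intro a _ b _ hab
      exact ball_disjoint_ball (by linarith [hsep a b hab])
    have hsub : (⋃ j ∈ s, ball (x j) (δ / 2)) ⊆ ball (x i) (R + δ / 2) := by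
      intro y hy
      simp only [Set.mem_iUnion] at hy
      obtain ⟨j, hj, hyj⟩ := hy
      have hjR : dist (x i) (x j) ≤ R := by
        simpa [hs] using hj
      have : dist y (x i) ≤ dist y (x j) + dist (x j) (x i) := dist_triangle _ _ _
      rw [mem_ball] at hyj ⊢
      rw [dist_comm (x j) (x i)] at this
      linarith
    have hμ : ∑ j ∈ s, volume (ball (x j) (δ / 2)) ≤ volume (ball (x i) (R + δ / 2)) := by
      rw [← measure_biUnion_finset hdisj (fun b _ => measurableSet_ball)]
      exact measure_mono hsub
    have hvb : ∀ (y : EuclideanSpace ℝ (Fin p)) (r : ℝ), 0 ≤ r →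
        volume (ball y r) = ENNReal.ofReal (r ^ p) * volume (ball (0 : EuclideanSpace ℝ (Fin p)) 1) := by
      intro y r hr
      rw [Measure.addHaar_ball volume y hr, finrank_euclideanSpace_fin]
    have hδ2 : (0:ℝ) ≤ δ / 2 := by linarith
    rw [hvb (x i) _ (by linarith)] at hμ
    have : ∑ j ∈ s, volume (ball (x j) (δ / 2))
        = (s.card : ℝ≥0∞) * (ENNReal.ofReal ((δ / 2) ^ p) * volume (ball (0 : EuclideanSpace ℝ (Fin p)) 1)) := by
      rw [Finset.sum_congr rfl fun j _ => hvb (x j) _ hδ2]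
      simp [Finset.sum_const, nsmul_eq_mul]
    rw [this, ← mul_assoc] at hμ
    have hvpos : volume (ball (0 : EuclideanSpace ℝ (Fin p)) 1) ≠ 0 :=
      (measure_ball_pos volume _ one_pos).ne'
    have hvtop : volume (ball (0 : EuclideanSpace ℝ (Fin p)) 1) ≠ ⊤ :=
      measure_ball_lt_top.ne
    rw [ENNReal.mul_le_mul_iff_left hvpos hvtop] at hμ
    have hcast : ((s.card : ℝ≥0∞)) * ENNReal.ofReal ((δ / 2) ^ p)
        = ENNReal.ofReal ((s.card : ℝ) * (δ / 2) ^ p) := by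
      rw [ENNReal.ofReal_mul (by positivity)]
      congr 1
      simp
    rw [hcast] at hμ
    have hreal : (s.card : ℝ) * (δ / 2) ^ p ≤ (R + δ / 2) ^ p := by
      have := (ENNReal.ofReal_le_ofReal_iff (by positivity)).mp hμ
      exact this
    have hkey : (R + δ / 2) ^ p = (2 * R / δ + 1) ^ p * (δ / 2) ^ p := by
      rw [← mul_pow]
      congr 1
      field_simp
    rw [hkey] at hreal
    exact le_of_mul_le_mul_right hreal (by positivity)

/-- Sum of inverse-power distances over δ-separated points. -/
lemma sum_dist_rpow_le {p n : ℕ} {q : ℝ} (hq : (p : ℝ) < q)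
    (x : Fin n → EuclideanSpace ℝ (Fin p)) {δ : ℝ} (hδ : 0 < δ)
    (hsep : ∀ i j, i ≠ j → δ ≤ dist (x i) (x j)) (i : Fin n) :
    ∑ j ∈ Finset.univ.erase i, (dist (x i) (x j) / δ) ^ (-q)
      ≤ (8:ℝ) ^ p * (1 - 2 ^ p * (2:ℝ) ^ (-q))⁻¹ := by
  set r : ℝ := 2 ^ p * (2:ℝ) ^ (-q) with hr
  have h2q : (2:ℝ) ^ (p:ℝ) < (2:ℝ) ^ q := Real.rpow_lt_rpow_left_iff (by norm_num) |>.mpr hq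
  have hr1 : r < 1 := by
    have hre : r = (2:ℝ) ^ ((p:ℝ) - q) := by
      rw [hr, ← Real.rpow_natCast 2 p, ← Real.rpow_add (by norm_num)]
      ring_nf
    rw [hre]
    exact Real.rpow_lt_one_of_one_lt_of_neg (by norm_num) (by linarith)
  have hr0 : 0 ≤ r := by positivity
  have hqpos : 0 < q := lt_of_le_of_lt (Nat.cast_nonneg p) hq
  -- the dyadic level function
  set t : Fin n → ℝ := fun j => dist (x i) (x j) / δ with ht
  have ht1 : ∀ j ∈ Finset.univ.erase i, (1:ℝ) ≤ t j := by
    intro j hj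
    have := hsep i j (Ne.symm (Finset.ne_of_mem_erase hj))
    rw [ht]
    rw [le_div_iff₀ hδ]
    simpa using this
  set f : Fin n → ℕ := fun j => Nat.log 2 ⌊t j⌋₊ with hf
  have hflow : ∀ j ∈ Finset.univ.erase i, ((2:ℝ) ^ (f j) : ℝ) ≤ t j := by
    intro j hj
    have h1 : 1 ≤ ⌊t j⌋₊ := Nat.le_floor (by exact_mod_cast ht1 j hj)
    have := Nat.pow_log_le_self 2 (Nat.one_le_iff_ne_zero.mp h1)
    calc ((2:ℝ) ^ (f j) : ℝ) = ((2 ^ (f j) : ℕ) : ℝ) := by push_cast; ring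
    _ ≤ (⌊t j⌋₊ : ℝ) := by exact_mod_cast this
    _ ≤ t j := Nat.floor_le (le_trans zero_le_one (ht1 j hj))
  have hfhigh : ∀ j ∈ Finset.univ.erase i, t j ≤ (2:ℝ) ^ (f j + 1) := by
    intro j hj
    have h2 : ⌊t j⌋₊ < 2 ^ (f j + 1) := Nat.lt_pow_succ_log_self (by norm_num) _
    have h3 : (⌊t j⌋₊ : ℝ) + 1 ≤ ((2:ℝ) ^ (f j + 1)) := by
      have : ⌊t j⌋₊ + 1 ≤ 2 ^ (f j + 1) := h2
      calc (⌊t j⌋₊ : ℝ) + 1 = ((⌊t j⌋₊ + 1 : ℕ) : ℝ) := by push_cast; ring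
      _ ≤ ((2 ^ (f j + 1) : ℕ) : ℝ) := by exact_mod_cast this
      _ = (2:ℝ) ^ (f j + 1) := by push_cast; ring
    have h4 : t j < (⌊t j⌋₊ : ℝ) + 1 := Nat.lt_floor_add_one _
    linarith
  set K : ℕ := (Finset.univ.erase i).sup f with hK
  have hmaps : ∀ j ∈ Finset.univ.erase i, f j ∈ Finset.range (K + 1) := by
    intro j hj
    rw [Finset.mem_range, Nat.lt_succ_iff]
    exact Finset.le_sup hj
  rw [← Finset.sum_fiberwise_of_maps_to hmaps]
  have hbound : ∀ k ∈ Finset.range (K + 1),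
      ∑ j ∈ (Finset.univ.erase i).filter (fun j => f j = k), t j ^ (-q)
        ≤ (8:ℝ) ^ p * r ^ k := by
    intro k _
    have hterm : ∀ j ∈ (Finset.univ.erase i).filter (fun j => f j = k),
        t j ^ (-q) ≤ ((2:ℝ) ^ k) ^ (-q) := by
      intro j hj
      rw [Finset.mem_filter] at hj
      refine Real.rpow_le_rpow_of_nonpos (by positivity) ?_ (by linarith)
      rw [← hj.2]
      exact hflow j hj.1
    have hcard : (((Finset.univ.erase i).filter (fun j => f j = k)).card : ℝ)
        ≤ (8:ℝ) ^ p * (2:ℝ) ^ (k * p) := by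
      have hsub : (Finset.univ.erase i).filter (fun j => f j = k)
          ⊆ Finset.univ.filter (fun j => dist (x i) (x j) ≤ 2 ^ (k + 1) * δ) := by
        intro j hj
        rw [Finset.mem_filter] at hj ⊢
        refine ⟨Finset.mem_univ _, ?_⟩
        have := hfhigh j hj.1
        rw [hj.2] at this
        rw [ht] at this
        rw [div_le_iff₀ hδ] at this
        linarith
      have h1 := pack_card x hδ hsep i (R := 2 ^ (k + 1) * δ) (by positivity)
      have h2 : (2 * (2 ^ (k + 1) * δ) / δ + 1 : ℝ) ^ p ≤ ((8:ℝ) * 2 ^ k) ^ p := by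
        apply pow_le_pow_left₀ (by positivity)
        have : (2 * (2 ^ (k + 1) * δ) / δ : ℝ) = 2 ^ (k + 2) := by
          field_simp; ring
        rw [this]
        have : ((8:ℝ) * 2 ^ k) = 2 ^ (k + 3) := by ring
        rw [this]
        have : (2:ℝ) ^ (k + 2) + 1 ≤ 2 ^ (k + 2) + 2 ^ (k + 2) := by
          have : (1:ℝ) ≤ 2 ^ (k + 2) := one_le_pow₀ (by norm_num)
          linarith
        calc (2:ℝ) ^ (k + 2) + 1 ≤ 2 ^ (k + 2) + 2 ^ (k + 2) := this
        _ = 2 ^ (k + 3) := by ring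
      calc (((Finset.univ.erase i).filter (fun j => f j = k)).card : ℝ)
          ≤ ((Finset.univ.filter (fun j => dist (x i) (x j) ≤ 2 ^ (k + 1) * δ)).card : ℝ) := by
            exact_mod_cast Finset.card_le_card hsub
      _ ≤ (2 * (2 ^ (k + 1) * δ) / δ + 1) ^ p := h1
      _ ≤ ((8:ℝ) * 2 ^ k) ^ p := h2
      _ = (8:ℝ) ^ p * ((2:ℝ) ^ k) ^ p := by rw [mul_pow]
      _ = (8:ℝ) ^ p * (2:ℝ) ^ (k * p) := by rw [← pow_mul]
    calc ∑ j ∈ (Finset.univ.erase i).filter (fun j => f j = k), t j ^ (-q)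
        ≤ ∑ _j ∈ (Finset.univ.erase i).filter (fun j => f j = k), ((2:ℝ) ^ k) ^ (-q) :=
          Finset.sum_le_sum hterm
    _ = (((Finset.univ.erase i).filter (fun j => f j = k)).card : ℝ) * ((2:ℝ) ^ k) ^ (-q) := by
          rw [Finset.sum_const, nsmul_eq_mul]
    _ ≤ (8:ℝ) ^ p * (2:ℝ) ^ (k * p) * ((2:ℝ) ^ k) ^ (-q) := by
          apply mul_le_mul_of_nonneg_right hcard (Real.rpow_nonneg (by positivity) _)
    _ = (8:ℝ) ^ p * r ^ k := by
          rw [hr]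
          have e1 : ((2:ℝ) ^ k) ^ (-q) = ((2:ℝ) ^ (-q)) ^ k := by
            rw [← Real.rpow_natCast (2:ℝ) k, ← Real.rpow_mul (by norm_num),
              ← Real.rpow_natCast ((2:ℝ) ^ (-q)) k, ← Real.rpow_mul (by norm_num)]
            ring_nf
          rw [e1, mul_pow, ← pow_mul]
          ring
  calc ∑ k ∈ Finset.range (K + 1), ∑ j ∈ (Finset.univ.erase i).filter (fun j => f j = k), t j ^ (-q)
      ≤ ∑ k ∈ Finset.range (K + 1), (8:ℝ) ^ p * r ^ k := Finset.sum_le_sum hbound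
  _ = (8:ℝ) ^ p * ∑ k ∈ Finset.range (K + 1), r ^ k := by rw [Finset.mul_sum]
  _ ≤ (8:ℝ) ^ p * (1 - r)⁻¹ := by
      apply mul_le_mul_of_nonneg_left _ (by positivity)
      have hsummable : Summable fun k : ℕ => r ^ k := summable_geometric_of_lt_one hr0 hr1
      calc ∑ k ∈ Finset.range (K + 1), r ^ k ≤ ∑' k : ℕ, r ^ k :=
            Summable.sum_le_tsum _ (fun k _ => by positivity) hsummable
      _ = (1 - r)⁻¹ := tsum_geometric_of_lt_one hr0 hr1

/-- For every `0 < ε < 1` there is `c = c(p, q, C, ε) > 0` such that for the normalized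
kernel matrix `P_σ(i,j) = Φ(‖x_i - x_j‖/σ) / Σ_{j'} Φ(‖x_i - x_{j'}‖/σ)` built from a
decreasing profile `Φ` with `Φ(0) = 1` and `Φ(r) ≤ C r^{-q}` (`q > p`) on `δ`-separated
points, `σ < cδ` implies `‖I - P_σ‖_∞ < ε`. -/
theorem stmt6 (p : ℕ) (q C : ℝ) (hq : (p : ℝ) < q) (hC : 0 < C)
    (ε : ℝ) (hε0 : 0 < ε) (hε1 : ε < 1) :
    ∃ c > (0 : ℝ), ∀ (Φ : ℝ → ℝ), (∀ r, 0 ≤ Φ r) → Φ 0 = 1 →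
      AntitoneOn Φ (Set.Ici 0) → (∀ r > (0 : ℝ), Φ r ≤ C * r ^ (-q)) →
      ∀ (n : ℕ) (hn : 0 < n) (x : Fin n → EuclideanSpace ℝ (Fin p)) (δ : ℝ), 0 < δ →
        (∀ i j, i ≠ j → δ ≤ dist (x i) (x j)) →
        ∀ σ : ℝ, 0 < σ → σ < c * δ →
          inftyNorm hn (1 - Matrix.of fun i j =>
            Φ (dist (x i) (x j) / σ) / ∑ j', Φ (dist (x i) (x j') / σ)) < ε := by
  have hqpos : 0 < q := lt_of_le_of_lt (Nat.cast_nonneg p) hq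
  set r : ℝ := 2 ^ p * (2:ℝ) ^ (-q) with hrdef
  have h2q : (2:ℝ) ^ (p:ℝ) < (2:ℝ) ^ q := Real.rpow_lt_rpow_left_iff (by norm_num) |>.mpr hq
  have hr1 : r < 1 := by
    have hre : r = (2:ℝ) ^ ((p:ℝ) - q) := by
      rw [hrdef, ← Real.rpow_natCast 2 p, ← Real.rpow_add (by norm_num)]
      ring_nf
    rw [hre]
    exact Real.rpow_lt_one_of_one_lt_of_neg (by norm_num) (by linarith)
  have hr0 : (0:ℝ) ≤ r := by positivity
  set K0 : ℝ := (8:ℝ) ^ p * (1 - r)⁻¹ with hK0def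
  have hK0pos : 0 < K0 := by
    rw [hK0def]
    have : 0 < 1 - r := by linarith
    positivity
  set KC : ℝ := C * K0 with hKCdef
  have hKCpos : 0 < KC := mul_pos hC hK0pos
  set A : ℝ := ε / ((2 - ε) * KC) with hAdef
  have hApos : 0 < A := by
    rw [hAdef]
    have : 0 < 2 - ε := by linarith
    positivity
  refine ⟨min 1 (A ^ q⁻¹), lt_min one_pos (Real.rpow_pos_of_pos hApos _), ?_⟩
  intro Φ hΦ0 hΦ1 _hΦanti hΦdecay n hn x δ hδ hsep σ hσ hσc
  set c : ℝ := min 1 (A ^ q⁻¹) with hcdef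
  have hcpos : 0 < c := lt_min one_pos (Real.rpow_pos_of_pos hApos _)
  -- per-row tail bound
  have hrowkey : ∀ i : Fin n,
      ∑ j ∈ Finset.univ.erase i, Φ (dist (x i) (x j) / σ) < ε / (2 - ε) := by
    intro i
    have hstep : ∀ j ∈ Finset.univ.erase i,
        Φ (dist (x i) (x j) / σ) ≤ C * (σ / δ) ^ q * (dist (x i) (x j) / δ) ^ (-q) := by
      intro j hj
      have hd : δ ≤ dist (x i) (x j) := hsep i j (Ne.symm (Finset.ne_of_mem_erase hj))
      have hdpos : 0 < dist (x i) (x j) := lt_of_lt_of_le hδ hd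
      have h1 : Φ (dist (x i) (x j) / σ) ≤ C * (dist (x i) (x j) / σ) ^ (-q) :=
        hΦdecay _ (by positivity)
      have h2 : (dist (x i) (x j) / σ) ^ (-q)
          = (σ / δ) ^ q * (dist (x i) (x j) / δ) ^ (-q) := by
        have e : dist (x i) (x j) / σ = (δ / σ) * (dist (x i) (x j) / δ) := by
          field_simp
        rw [e, Real.mul_rpow (by positivity) (by positivity)]
        congr 1
        rw [Real.rpow_neg (by positivity), ← Real.inv_rpow (by positivity)]
        congr 1
        field_simp
      calc Φ (dist (x i) (x j) / σ) ≤ C * (dist (x i) (x j) / σ) ^ (-q) := h1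
      _ = C * ((σ / δ) ^ q * (dist (x i) (x j) / δ) ^ (-q)) := by rw [h2]
      _ = C * (σ / δ) ^ q * (dist (x i) (x j) / δ) ^ (-q) := by ring
    have hT : ∑ j ∈ Finset.univ.erase i, Φ (dist (x i) (x j) / σ) ≤ KC * (σ / δ) ^ q := by
      calc ∑ j ∈ Finset.univ.erase i, Φ (dist (x i) (x j) / σ)
          ≤ ∑ j ∈ Finset.univ.erase i,
              C * (σ / δ) ^ q * (dist (x i) (x j) / δ) ^ (-q) := Finset.sum_le_sum hstep
      _ = C * (σ / δ) ^ q * ∑ j ∈ Finset.univ.erase i, (dist (x i) (x j) / δ) ^ (-q) := by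
            rw [← Finset.mul_sum]
      _ ≤ C * (σ / δ) ^ q * ((8:ℝ) ^ p * (1 - 2 ^ p * (2:ℝ) ^ (-q))⁻¹) := by
            apply mul_le_mul_of_nonneg_left (sum_dist_rpow_le hq x hδ hsep i)
            positivity
      _ = KC * (σ / δ) ^ q := by rw [hKCdef, hK0def, hrdef]; ring
    have hratio : σ / δ < c := (div_lt_iff₀ hδ).mpr hσc
    have hlt : (σ / δ) ^ q < c ^ q :=
      Real.rpow_lt_rpow (by positivity) hratio hqpos
    have hcq : c ^ q ≤ A := by
      calc c ^ q ≤ (A ^ q⁻¹) ^ q :=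
            Real.rpow_le_rpow hcpos.le (min_le_right _ _) hqpos.le
      _ = A := Real.rpow_inv_rpow hApos.le hqpos.ne'
    have hKCA : KC * A = ε / (2 - ε) := by
      rw [hAdef]
      have h2ε : (2 - ε) ≠ 0 := by linarith
      field_simp
    calc ∑ j ∈ Finset.univ.erase i, Φ (dist (x i) (x j) / σ) ≤ KC * (σ / δ) ^ q := hT
    _ < KC * c ^ q := by exact mul_lt_mul_of_pos_left hlt hKCpos
    _ ≤ KC * A := mul_le_mul_of_nonneg_left hcq hKCpos.le
    _ = ε / (2 - ε) := hKCA
  -- now compute the row sums of I - P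
  rw [inftyNorm, Finset.sup'_lt_iff]
  intro i _
  set T : ℝ := ∑ j ∈ Finset.univ.erase i, Φ (dist (x i) (x j) / σ) with hTdef
  have hT0 : 0 ≤ T := Finset.sum_nonneg fun j _ => hΦ0 _
  have hTε : T < ε / (2 - ε) := hrowkey i
  set S : ℝ := ∑ j', Φ (dist (x i) (x j') / σ) with hSdef
  have hS : S = 1 + T := by
    rw [hSdef, hTdef, ← Finset.add_sum_erase Finset.univ _ (Finset.mem_univ i)]
    congr 1
    simp [hΦ1]
  have hSpos : 0 < S := by rw [hS]; linarith
  have hS1 : 1 ≤ S := by rw [hS]; linarith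
  have habs : ∀ j, |(1 - Matrix.of fun i j =>
      Φ (dist (x i) (x j) / σ) / ∑ j', Φ (dist (x i) (x j') / σ)) i j|
      = if i = j then 1 - 1 / S else Φ (dist (x i) (x j) / σ) / S := by
    intro j
    rw [Matrix.sub_apply, Matrix.of_apply]
    by_cases h : i = j
    · subst h
      rw [Matrix.one_apply_eq, if_pos rfl]
      rw [show dist (x i) (x i) = 0 by simp, zero_div, hΦ1, ← hSdef]
      rw [abs_of_nonneg]
      have : 1 / S ≤ 1 := by
        rw [div_le_one hSpos]; exact hS1
      linarith
    · rw [Matrix.one_apply_ne h, if_neg h, ← hSdef, zero_sub, abs_neg,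
        abs_of_nonneg (div_nonneg (hΦ0 _) hSpos.le)]
  calc ∑ j, |(1 - Matrix.of fun i j =>
        Φ (dist (x i) (x j) / σ) / ∑ j', Φ (dist (x i) (x j') / σ)) i j|
      = ∑ j, (if i = j then 1 - 1 / S else Φ (dist (x i) (x j) / σ) / S) := by
        exact Finset.sum_congr rfl fun j _ => habs j
  _ = (1 - 1 / S) + ∑ j ∈ Finset.univ.erase i, Φ (dist (x i) (x j) / σ) / S := by
        rw [← Finset.add_sum_erase Finset.univ _ (Finset.mem_univ i)]
        simp only [if_pos rfl]
        congr 1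
        refine Finset.sum_congr rfl fun j hj => ?_
        rw [if_neg (Ne.symm (Finset.ne_of_mem_erase hj))]
  _ = (1 - 1 / S) + T / S := by
        rw [hTdef, Finset.sum_div]
  _ = 2 * T / (1 + T) := by
        rw [hS]
        have h1T : (1 + T) ≠ 0 := by linarith
        field_simp
        ring
  _ < ε := by
        rw [div_lt_iff₀ (by linarith : (0:ℝ) < 1 + T)]
        have h2ε : (0:ℝ) < 2 - ε := by linarith
        have : T * (2 - ε) < ε := (lt_div_iff₀ h2ε).mp hTε
        nlinarith
end
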